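/- (Causal state reduction.) Let (A_i, B_i, C_i, D_i) with state sizes (n_i) be a recurrent realization of the causal operator T, and let 𝒞_i be its controllability matrices. Then there exists a recurrent realization of T whose state sizes are n_i' = rank(𝒞_i) for every 1 ≤ i ≤ ℓ−1 (with n_0' = n_ℓ' = 0). -/

import Mathlib

open Matrix

/-- `stProd n A i j` is the state-transition product `A (i-1) * A (i-2) * ⋯ * A j`
(mapping `ℝ^{n j}` to `ℝ^{n i}`), with the empty product (`i = j`) equal to the identity. -/
noncomputable def stProd (n : ℕ → ℕ) (A : ∀ i : ℕ, Matrix (Fin (n (i + 1))) (Fin (n i)) ℝ) :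
    (i j : ℕ) → Matrix (Fin (n i)) (Fin (n j)) ℝ
  | 0, j =>
      if h : (0 : ℕ) = j then
        (1 : Matrix (Fin (n 0)) (Fin (n 0)) ℝ).submatrix id (Fin.cast (congrArg n h.symm))
      else 0
  | i + 1, j =>
      if h : i + 1 = j then
        (1 : Matrix (Fin (n (i + 1))) (Fin (n (i + 1))) ℝ).submatrix id
          (Fin.cast (congrArg n h.symm))
      else A i * stProd n A i j

/-- `T` is a causal operator: its `d × d` blocks `T i j` vanish above the block diagonal. -/
def IsCausal (d ℓ : ℕ) (T : ℕ → ℕ → Matrix (Fin d) (Fin d) ℝ) : Prop :=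
  ∀ i j, i < ℓ → j < ℓ → i < j → T i j = 0

/-- `(A, B, C, D)` with state sizes `n` is a recurrent realization of the causal operator `T`:
`T i i = D i` and `T i j = C i * (A (i-1) * ⋯ * A (j+1)) * B j` for `i > j`. -/
def IsRealization (d ℓ : ℕ) (T : ℕ → ℕ → Matrix (Fin d) (Fin d) ℝ) (n : ℕ → ℕ)
    (A : ∀ i : ℕ, Matrix (Fin (n (i + 1))) (Fin (n i)) ℝ)
    (B : ∀ i : ℕ, Matrix (Fin (n (i + 1))) (Fin d) ℝ)
    (C : ∀ i : ℕ, Matrix (Fin d) (Fin (n i)) ℝ)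
    (D : ℕ → Matrix (Fin d) (Fin d) ℝ) : Prop :=
  (∀ i, i < ℓ → T i i = D i) ∧
  ∀ i j, i < ℓ → j < i → T i j = C i * stProd n A i (j + 1) * B j

/-- The operator submatrix `H_i = T_{i:,:i-1}`, with rows indexed by block row `i + k`
(`k < ℓ - i`) and columns by block column `j < i`. -/
def Hmat (d ℓ : ℕ) (T : ℕ → ℕ → Matrix (Fin d) (Fin d) ℝ) (i : ℕ) :
    Matrix (Fin (ℓ - i) × Fin d) (Fin i × Fin d) ℝ :=
  fun p q => T (i + (p.1 : ℕ)) (q.1 : ℕ) p.2 q.2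

/-- The observability matrix at index `i`, with block rows `C (i+k) * A (i+k-1) * ⋯ * A i`. -/
noncomputable def Obs (d ℓ : ℕ) (n : ℕ → ℕ)
    (A : ∀ i : ℕ, Matrix (Fin (n (i + 1))) (Fin (n i)) ℝ)
    (C : ∀ i : ℕ, Matrix (Fin d) (Fin (n i)) ℝ) (i : ℕ) :
    Matrix (Fin (ℓ - i) × Fin d) (Fin (n i)) ℝ :=
  fun p s => (C (i + (p.1 : ℕ)) * stProd n A (i + (p.1 : ℕ)) i) p.2 s

/-- The controllability matrix at index `i`, with block columns `A (i-1) * ⋯ * A (j+1) * B j`. -/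
noncomputable def Ctrb (d : ℕ) (n : ℕ → ℕ)
    (A : ∀ i : ℕ, Matrix (Fin (n (i + 1))) (Fin (n i)) ℝ)
    (B : ∀ i : ℕ, Matrix (Fin (n (i + 1))) (Fin d) ℝ) (i : ℕ) :
    Matrix (Fin (n i)) (Fin i × Fin d) ℝ :=
  fun s q => (stProd n A i ((q.1 : ℕ) + 1) * B (q.1 : ℕ)) s q.2


/-!
Let `P_i Q_i` be a factorization through `ℝ^(rank 𝒞_i)` of a projection onto the column space
of `𝒞_i` (the states reachable at time `i`). Compressing the realization to
`(Q_{i+1} A_i P_i, Q_{i+1} B_i, C_i P_i, D_i)` keeps every Markov parameter: `A_i` maps states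
reachable at time `i` to states reachable at time `i + 1`, and the columns of `B_i` are reachable
at time `i + 1`, so by induction `P_i` lifts each compressed block column of the controllability
matrix back to the original one, `A_{i-1} ⋯ A_{j+1} B_j`.
-/

namespace Matrix

theorem exists_mul_mul_eq_self {K m κ : Type*} [Field K] [Fintype m] [Fintype κ]
    (M : Matrix m κ K) :
    ∃ (P : Matrix m (Fin M.rank) K) (Q : Matrix (Fin M.rank) m K), P * Q * M = M := by
  classical
  set V := LinearMap.range M.mulVecLin
  let e : V ≃ₗ[K] (Fin M.rank → K) := (Module.finBasisOfFinrankEq K V rfl).equivFun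
  obtain ⟨π, hπ⟩ := V.subtype.exists_leftInverse_of_injective V.ker_subtype
  refine ⟨LinearMap.toMatrix' (V.subtype ∘ₗ e.symm.toLinearMap),
    LinearMap.toMatrix' (e.toLinearMap ∘ₗ π), toLin'.injective (LinearMap.ext fun v => ?_)⟩
  have hπ : (π (M *ᵥ v) : m → K) = M *ᵥ v :=
    congrArg Subtype.val (LinearMap.congr_fun hπ ⟨M *ᵥ v, LinearMap.mem_range_self _ v⟩)
  simp [toLin'_mul, hπ]

end Matrix

section Compression

variable {d : ℕ} {n r : ℕ → ℕ} (A : ∀ i : ℕ, Matrix (Fin (n (i + 1))) (Fin (n i)) ℝ)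
  (B : ∀ i : ℕ, Matrix (Fin (n (i + 1))) (Fin d) ℝ)
  (P : ∀ i, Matrix (Fin (n i)) (Fin (r i)) ℝ) (Q : ∀ i, Matrix (Fin (r i)) (Fin (n i)) ℝ)

theorem stProd_self (i : ℕ) : stProd n A i i = 1 := by
  cases i <;> simp [stProd]

theorem stProd_succ_left {i j : ℕ} (h : i + 1 ≠ j) :
    stProd n A (i + 1) j = A i * stProd n A i j := by
  rw [stProd, dif_neg h]

theorem ctrb_submatrix_prodMk {i j : ℕ} (hj : j < i) :
    (Ctrb d n A B i).submatrix id (Prod.mk ⟨j, hj⟩) = stProd n A i (j + 1) * B j :=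
  rfl

theorem mul_stProd_mul_of_mul_ctrb_eq {i j : ℕ} (X : Matrix (Fin (n i)) (Fin (n i)) ℝ)
    (hX : X * Ctrb d n A B i = Ctrb d n A B i) (hj : j < i) :
    X * (stProd n A i (j + 1) * B j) = stProd n A i (j + 1) * B j := by
  rw [← ctrb_submatrix_prodMk A B hj]
  exact congrArg (·.submatrix id (Prod.mk ⟨j, hj⟩)) hX

theorem mul_stProd_compress_mul {i j : ℕ}
    (hPQ : ∀ k ≤ i, P k * Q k * Ctrb d n A B k = Ctrb d n A B k) (hj : j < i) :
    P i * (stProd r (fun k => Q (k + 1) * A k * P k) i (j + 1) * (Q (j + 1) * B j)) =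
      stProd n A i (j + 1) * B j := by
  induction i with
  | zero => omega
  | succ i ih =>
    have hfix := fun j (hj : j < i + 1) =>
      mul_stProd_mul_of_mul_ctrb_eq A B _ (hPQ (i + 1) le_rfl) hj
    rcases Nat.lt_succ_iff_lt_or_eq.mp hj with hj | rfl
    · calc P (i + 1) * (stProd r (fun k => Q (k + 1) * A k * P k) (i + 1) (j + 1) *
              (Q (j + 1) * B j))
          = P (i + 1) * Q (i + 1) * (A i * (P i *
              (stProd r (fun k => Q (k + 1) * A k * P k) i (j + 1) * (Q (j + 1) * B j)))) := by
            rw [stProd_succ_left _ (by omega)]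
            simp only [Matrix.mul_assoc]
        _ = P (i + 1) * Q (i + 1) * (stProd n A (i + 1) (j + 1) * B j) := by
            rw [ih (fun k hk => hPQ k (by omega)) hj, stProd_succ_left _ (by omega)]
            simp only [Matrix.mul_assoc]
        _ = _ := hfix j (by omega)
    · simpa [stProd_self, Matrix.mul_assoc] using hfix j hj

theorem IsRealization.compress {ℓ : ℕ} {T : ℕ → ℕ → Matrix (Fin d) (Fin d) ℝ}
    {C : ∀ i : ℕ, Matrix (Fin d) (Fin (n i)) ℝ} {D : ℕ → Matrix (Fin d) (Fin d) ℝ}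
    (h : IsRealization d ℓ T n A B C D)
    (hPQ : ∀ k < ℓ, P k * Q k * Ctrb d n A B k = Ctrb d n A B k) :
    IsRealization d ℓ T r (fun k => Q (k + 1) * A k * P k) (fun k => Q (k + 1) * B k)
      (fun k => C k * P k) D := by
  refine ⟨h.1, fun i j hi hj => ?_⟩
  rw [h.2 i j hi hj, Matrix.mul_assoc, Matrix.mul_assoc, Matrix.mul_assoc,
    mul_stProd_compress_mul A B P Q (fun k hk => hPQ k (by omega)) hj]

end Compression

theorem causal_state_reduction_general (d ℓ : ℕ)
    (T : ℕ → ℕ → Matrix (Fin d) (Fin d) ℝ)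
    (n : ℕ → ℕ)
    (A : ∀ i : ℕ, Matrix (Fin (n (i + 1))) (Fin (n i)) ℝ)
    (B : ∀ i : ℕ, Matrix (Fin (n (i + 1))) (Fin d) ℝ)
    (C : ∀ i : ℕ, Matrix (Fin d) (Fin (n i)) ℝ)
    (D : ℕ → Matrix (Fin d) (Fin d) ℝ)
    (hreal : IsRealization d ℓ T n A B C D) :
    ∃ (n' : ℕ → ℕ)
      (A' : ∀ i : ℕ, Matrix (Fin (n' (i + 1))) (Fin (n' i)) ℝ)
      (B' : ∀ i : ℕ, Matrix (Fin (n' (i + 1))) (Fin d) ℝ)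
      (C' : ∀ i : ℕ, Matrix (Fin d) (Fin (n' i)) ℝ)
      (D' : ℕ → Matrix (Fin d) (Fin d) ℝ),
      IsRealization d ℓ T n' A' B' C' D' ∧ n' 0 = 0 ∧ n' ℓ = 0 ∧
        ∀ i, 1 ≤ i → i < ℓ → n' i = (Ctrb d n A B i).rank := by
  -- `r ℓ` must vanish, while `rank 𝒞_ℓ` need not.
  let r i := if i < ℓ then (Ctrb d n A B i).rank else 0
  have hfactor : ∀ i, ∃ (P : Matrix (Fin (n i)) (Fin (r i)) ℝ)
      (Q : Matrix (Fin (r i)) (Fin (n i)) ℝ), i < ℓ → P * Q * Ctrb d n A B i = Ctrb d n A B i := by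
    intro i
    by_cases hi : i < ℓ
    · rw [show r i = (Ctrb d n A B i).rank from if_pos hi]
      obtain ⟨P, Q, hPQ⟩ := (Ctrb d n A B i).exists_mul_mul_eq_self
      exact ⟨P, Q, fun _ => hPQ⟩
    · exact ⟨0, 0, fun h => absurd h hi⟩
  choose P Q hPQ using hfactor
  have hrank₀ : (Ctrb d n A B 0).rank = 0 := by
    simpa using (Ctrb d n A B 0).rank_le_card_width
  exact ⟨r, _, _, _, D, hreal.compress A B P Q hPQ, by simp [r, hrank₀], by simp [r],
    fun i _ hi => if_pos hi⟩

/-- causal state reduction: if `(A, B, C, D)` realizes the causal operator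
`T` with controllability matrices `𝒞_i`, then `T` admits a recurrent realization with state
sizes `n' i = rank 𝒞_i` for `1 ≤ i ≤ ℓ - 1` (and `n' 0 = n' ℓ = 0`). -/
theorem causal_state_reduction (d ℓ : ℕ) (hd : 1 ≤ d) (hℓ : 1 ≤ ℓ)
    (T : ℕ → ℕ → Matrix (Fin d) (Fin d) ℝ) (hT : IsCausal d ℓ T)
    (n : ℕ → ℕ)
    (A : ∀ i : ℕ, Matrix (Fin (n (i + 1))) (Fin (n i)) ℝ)
    (B : ∀ i : ℕ, Matrix (Fin (n (i + 1))) (Fin d) ℝ)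
    (C : ∀ i : ℕ, Matrix (Fin d) (Fin (n i)) ℝ)
    (D : ℕ → Matrix (Fin d) (Fin d) ℝ)
    (hreal : IsRealization d ℓ T n A B C D) :
    ∃ (n' : ℕ → ℕ)
      (A' : ∀ i : ℕ, Matrix (Fin (n' (i + 1))) (Fin (n' i)) ℝ)
      (B' : ∀ i : ℕ, Matrix (Fin (n' (i + 1))) (Fin d) ℝ)
      (C' : ∀ i : ℕ, Matrix (Fin d) (Fin (n' i)) ℝ)
      (D' : ℕ → Matrix (Fin d) (Fin d) ℝ),
      IsRealization d ℓ T n' A' B' C' D' ∧ n' 0 = 0 ∧ n' ℓ = 0 ∧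
        ∀ i, 1 ≤ i → i < ℓ → n' i = (Ctrb d n A B i).rank :=
  causal_state_reduction_general d ℓ T n A B C D hreal
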